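/- For A ∈ ℝ and B, C ∈ ℝ \ {0}, let m(A, B, C) be the real 4×4 lower-triangular matrix with rows: row 0 = (BC, 0, 0, 0); row 1 = (−A/3, B, 0, 0); row 2 = (A²/(9BC), −2A/(3C), B/C, 0); row 3 = (−A³/(27B²C²), A²/(3BC²), −A/C², B/C²). Then for all A, A' ∈ ℝ and B, B', C, C' ∈ ℝ \ {0}, m(A, B, C)·m(A', B', C') = m(A·B'·C' + A'·B, B·B', C·C'). In particular, the set G = { m(A, B, C) : A ∈ ℝ, B, C ∈ ℝ \ {0} } is closed under matrix multiplication and forms a subgroup of GL(4, ℝ). -/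
import Mathlib

/-- The matrix `m(A,B,C)` of the residual 3-parameter group `G` acting on the
invariant coframe `(θ⁰, θ¹, θ², θ³)`. -/
noncomputable def resm (A B C : ℝ) : Matrix (Fin 4) (Fin 4) ℝ :=
  !![B*C, 0, 0, 0;
     -A/3, B, 0, 0;
     A^2/(9*B*C), -2*A/(3*C), B/C, 0;
     -A^3/(27*B^2*C^2), A^2/(3*B*C^2), -A/C^2, B/C^2]

lemma resm_mul (A A' B B' C C' : ℝ) (hB : B ≠ 0) (hB' : B' ≠ 0) (hC : C ≠ 0) (hC' : C' ≠ 0) :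
    resm A B C * resm A' B' C' = resm (A*B'*C' + A'*B) (B*B') (C*C') := by
  ext i j
  fin_cases i <;> fin_cases j <;>
    · simp [resm, Matrix.mul_apply, Fin.sum_univ_four, Matrix.vecHead, Matrix.vecTail]
      try field_simp
      try ring

lemma resm_one : resm 0 1 1 = 1 := by
  ext i j
  fin_cases i <;> fin_cases j <;>
    simp [resm, Matrix.one_apply, Matrix.vecHead, Matrix.vecTail]

lemma resm_inv (A B C : ℝ) (hB : B ≠ 0) (hC : C ≠ 0) :
    resm A B C * resm (-A/(B^2*C)) B⁻¹ C⁻¹ = 1 := by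
  rw [resm_mul A (-A/(B^2*C)) B B⁻¹ C C⁻¹ hB (inv_ne_zero hB) hC (inv_ne_zero hC)]
  rw [show A*B⁻¹*C⁻¹ + (-A/(B^2*C))*B = 0 by field_simp; ring,
    mul_inv_cancel₀ hB, mul_inv_cancel₀ hC, resm_one]

/-- Multiplication law of the residual group:
`m(A,B,C)·m(A',B',C') = m(AB'C' + A'B, BB', CC')`; in particular the set
`G = {m(A,B,C) : A ∈ ℝ, B, C ∈ ℝ \ {0}}` is closed under matrix multiplication
and forms a subgroup of `GL(4,ℝ)`. -/
theorem residual_group_mul :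
    (∀ (A A' B B' C C' : ℝ), B ≠ 0 → B' ≠ 0 → C ≠ 0 → C' ≠ 0 →
        resm A B C * resm A' B' C' = resm (A*B'*C' + A'*B) (B*B') (C*C')) ∧
    (∃ H : Subgroup (GL (Fin 4) ℝ), ∀ g : GL (Fin 4) ℝ,
        g ∈ H ↔ ∃ A B C : ℝ, B ≠ 0 ∧ C ≠ 0 ∧
          (g : Matrix (Fin 4) (Fin 4) ℝ) = resm A B C) := by
  refine ⟨resm_mul, ⟨{
    carrier := {g | ∃ A B C : ℝ, B ≠ 0 ∧ C ≠ 0 ∧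
      (g : Matrix (Fin 4) (Fin 4) ℝ) = resm A B C}
    one_mem' := ⟨0, 1, 1, one_ne_zero, one_ne_zero, by simp [resm_one]⟩
    mul_mem' := by
      rintro g h ⟨A, B, C, hB, hC, hg⟩ ⟨A', B', C', hB', hC', hh⟩
      exact ⟨A*B'*C' + A'*B, B*B', C*C', mul_ne_zero hB hB', mul_ne_zero hC hC',
        by rw [Units.val_mul, hg, hh, resm_mul A A' B B' C C' hB hB' hC hC']⟩
    inv_mem' := by
      rintro g ⟨A, B, C, hB, hC, hg⟩
      refine ⟨-A/(B^2*C), B⁻¹, C⁻¹, inv_ne_zero hB, inv_ne_zero hC, ?_⟩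
      have h1 : (g : Matrix (Fin 4) (Fin 4) ℝ) * resm (-A/(B^2*C)) B⁻¹ C⁻¹ = 1 := by
        rw [hg]; exact resm_inv A B C hB hC
      calc (↑g⁻¹ : Matrix (Fin 4) (Fin 4) ℝ)
          = ↑g⁻¹ * (↑g * resm (-A/(B^2*C)) B⁻¹ C⁻¹) := by rw [h1, mul_one]
        _ = (↑g⁻¹ * ↑g) * resm (-A/(B^2*C)) B⁻¹ C⁻¹ := by rw [mul_assoc]
        _ = resm (-A/(B^2*C)) B⁻¹ C⁻¹ := by
            rw [← Units.val_mul, inv_mul_cancel g, Units.val_one, one_mul]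
  }, fun g => Iff.rfl⟩⟩
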